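/- arXiv:1408.0831 — 4 statements merged into one kernel-verified Lean document; each statement's English description precedes it below -/
import Mathlib

section
/- For the determinant on d×d matrices viewed as a function of the gradient: for every smooth map y: Ω → ℝ^d on an open set Ω ⊂ ℝ^d and every φ ∈ C_c^∞(Ω; ℝ^d), one has ∫_Ω det(∇y + ∇φ) dx = ∫_Ω det(∇y) dx; i.e., the determinant is a null-Lagrangean. -/
open MeasureTheory Finset

namespace DetNullLag

variable {d : ℕ}

/-- Directional derivative in coordinate direction `j`. -/
noncomputable def D (j : Fin d) (f : (Fin d → ℝ) → ℝ) (x : Fin d → ℝ) : ℝ :=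
  fderiv ℝ f x (Pi.single j 1)

lemma contDiff_D {f : (Fin d → ℝ) → ℝ} (hf : ContDiff ℝ (⊤ : ℕ∞) f) (j : Fin d) :
    ContDiff ℝ (⊤ : ℕ∞) (D j f) :=
  ContDiff.clm_apply (hf.fderiv_right (by simp)) contDiff_const

lemma differentiable_D {f : (Fin d → ℝ) → ℝ} (hf : ContDiff ℝ (⊤ : ℕ∞) f) (j : Fin d) :
    Differentiable ℝ (D j f) :=
  (contDiff_D hf j).differentiable (by simp)

lemma D_zero_of_nmem_tsupport {f : (Fin d → ℝ) → ℝ} {x : Fin d → ℝ}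
    (hx : x ∉ tsupport f) (j : Fin d) : D j f x = 0 := by
  have : fderiv ℝ f x = 0 := by
    by_contra h
    exact hx (support_fderiv_subset ℝ (by simpa [Function.mem_support] using h))
  simp [D, this]

lemma hasCompactSupport_D {f : (Fin d → ℝ) → ℝ} (hf : HasCompactSupport f) (j : Fin d) :
    HasCompactSupport (D j f) :=
  HasCompactSupport.intro hf (fun _ hx => D_zero_of_nmem_tsupport hx j)

lemma integral_D_eq_zero {f : (Fin d → ℝ) → ℝ} (hf : ContDiff ℝ (⊤ : ℕ∞) f)
    (hs : HasCompactSupport f) (j : Fin d) : ∫ x, D j f x = 0 := by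
  have h1 : Integrable (fun x => (1:ℝ) * fderiv ℝ f x (Pi.single j 1)) volume := by
    simpa using (show Integrable (fun x => fderiv ℝ f x (Pi.single j 1)) volume from
      ((contDiff_D hf j).continuous).integrable_of_hasCompactSupport
      (hasCompactSupport_D hs j))
  have h2 : Integrable (fun x => f x) volume :=
    (hf.continuous).integrable_of_hasCompactSupport hs
  have := integral_mul_fderiv_eq_neg_fderiv_mul_of_integrable
    (f := fun _ : Fin d → ℝ => (1:ℝ)) (g := f) (v := Pi.single j 1) (μ := volume)
    (by simp) h1 (by simpa using h2)
    (fun x _ => differentiableAt_const (1:ℝ)) (fun x _ => hf.differentiable (by simp) x)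
  simpa [D] using this

lemma D_mul {f g : (Fin d → ℝ) → ℝ} (hf : Differentiable ℝ f) (hg : Differentiable ℝ g)
    (j : Fin d) (x : Fin d → ℝ) :
    D j (fun x => f x * g x) x = D j f x * g x + f x * D j g x := by
  unfold D
  rw [fderiv_fun_mul (hf x) (hg x)]
  simp only [ContinuousLinearMap.add_apply, ContinuousLinearMap.smul_apply, smul_eq_mul]
  ring

lemma D_prod {ι : Type*} [DecidableEq ι] (u : Finset ι) (g : ι → (Fin d → ℝ) → ℝ)
    (hg : ∀ i ∈ u, Differentiable ℝ (g i)) (j : Fin d) (x : Fin d → ℝ) :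
    D j (fun x => ∏ i ∈ u, g i x) x
      = ∑ i ∈ u, (∏ k ∈ u.erase i, g k x) * D j (g i) x := by
  unfold D
  rw [fderiv_finset_prod (fun i hi => (hg i hi).differentiableAt)]
  simp

lemma D_comm {f : (Fin d → ℝ) → ℝ} (hf : ContDiff ℝ (⊤ : ℕ∞) f) (a b : Fin d) (x : Fin d → ℝ) :
    D a (D b f) x = D b (D a f) x := by
  have hdf : ContDiff ℝ (⊤ : ℕ∞) (fderiv ℝ f) := hf.fderiv_right (by simp)
  have key : ∀ v w : Fin d → ℝ,
      fderiv ℝ (fun y => fderiv ℝ f y v) x w = fderiv ℝ (fderiv ℝ f) x w v := by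
    intro v w
    rw [fderiv_clm_apply (hdf.differentiable (by simp) x) (differentiableAt_const v)]
    simp
  unfold D
  rw [key, key]
  exact second_derivative_symmetric (fun y => (hf.differentiable (by simp) y).hasFDerivAt)
    ((hdf.differentiable (by simp) x).hasFDerivAt) _ _

lemma det_expand (A : Matrix (Fin d) (Fin d) ℝ) :
    A.det = ∑ σ : Equiv.Perm (Fin d), ((Equiv.Perm.sign σ : ℤ) : ℝ) * ∏ i, A i (σ i) := by
  rw [← Matrix.det_transpose, Matrix.det_apply']
  simp [Matrix.transpose_apply]

lemma cancel_sum (w : Fin d → (Fin d → ℝ) → ℝ) (hw : ∀ i, ContDiff ℝ (⊤ : ℕ∞) (w i))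
    (p : (Fin d → ℝ) → ℝ) (i₀ : Fin d) (x : Fin d → ℝ) :
    ∑ σ : Equiv.Perm (Fin d), ((Equiv.Perm.sign σ : ℤ) : ℝ) *
      (p x * ∑ k ∈ univ.erase i₀, (∏ i ∈ (univ.erase i₀).erase k, D (σ i) (w i) x) *
        D (σ i₀) (D (σ k) (w k)) x) = 0 := by
  simp only [Finset.mul_sum]
  rw [← Finset.sum_product']
  refine Finset.sum_involution (fun q _ => (q.1 * Equiv.swap i₀ q.2, q.2)) ?_ ?_ ?_ ?_
  · rintro ⟨σ, k⟩ hq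
    have hk : k ≠ i₀ := Finset.ne_of_mem_erase (Finset.mem_product.mp hq).2
    have hsign : ((Equiv.Perm.sign (σ * Equiv.swap i₀ k) : ℤ) : ℝ)
        = -((Equiv.Perm.sign σ : ℤ) : ℝ) := by
      rw [Equiv.Perm.sign_mul, Equiv.Perm.sign_swap (Ne.symm hk)]
      push_cast
      ring
    have happ0 : (σ * Equiv.swap i₀ k) i₀ = σ k := by
      simp [Equiv.Perm.mul_apply]
    have happ1 : (σ * Equiv.swap i₀ k) k = σ i₀ := by
      simp [Equiv.Perm.mul_apply]
    have hprod : (∏ i ∈ (univ.erase i₀).erase k, D ((σ * Equiv.swap i₀ k) i) (w i) x)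
        = ∏ i ∈ (univ.erase i₀).erase k, D (σ i) (w i) x := by
      refine Finset.prod_congr rfl fun i hi => ?_
      have hik : i ≠ k := Finset.ne_of_mem_erase hi
      have hii₀ : i ≠ i₀ := Finset.ne_of_mem_erase (Finset.mem_of_mem_erase hi)
      rw [Equiv.Perm.mul_apply, Equiv.swap_apply_of_ne_of_ne hii₀ hik]
    have hsecond : D ((σ * Equiv.swap i₀ k) i₀) (D ((σ * Equiv.swap i₀ k) k) (w k)) x
        = D (σ i₀) (D (σ k) (w k)) x := by
      rw [happ0, happ1]
      exact D_comm (hw k) _ _ x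
    simp only [hsign, hprod, hsecond]
    ring
  · rintro ⟨σ, k⟩ hq _
    have hk : k ≠ i₀ := Finset.ne_of_mem_erase (Finset.mem_product.mp hq).2
    intro hcontra
    have h1 : σ * Equiv.swap i₀ k = σ := congrArg Prod.fst hcontra
    have h2 : σ k = σ i₀ := by
      have := congrArg (fun e : Equiv.Perm (Fin d) => e i₀) h1
      simpa [Equiv.Perm.mul_apply, Equiv.swap_apply_left] using this
    exact hk (σ.injective h2)
  · rintro ⟨σ, k⟩ hq
    exact Finset.mem_product.mpr ⟨Finset.mem_univ _, (Finset.mem_product.mp hq).2⟩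
  · rintro ⟨σ, k⟩ hq
    simp [Equiv.mul_swap_mul_self]

lemma det_row_phi_eq (w : Fin d → (Fin d → ℝ) → ℝ) (hw : ∀ i, ContDiff ℝ (⊤ : ℕ∞) (w i))
    (p : (Fin d → ℝ) → ℝ) (hp : ContDiff ℝ (⊤ : ℕ∞) p) (i₀ : Fin d) (x : Fin d → ℝ) :
    (Matrix.of fun i j => if i = i₀ then D j p x else D j (w i) x).det
      = ∑ σ : Equiv.Perm (Fin d), ((Equiv.Perm.sign σ : ℤ) : ℝ) *
          D (σ i₀) (fun x => p x * ∏ i ∈ univ.erase i₀, D (σ i) (w i) x) x := by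
  have hP : ∀ σ : Equiv.Perm (Fin d),
      Differentiable ℝ (fun x => ∏ i ∈ univ.erase i₀, D (σ i) (w i) x) := by
    intro σ x
    exact (HasFDerivAt.finset_prod
      (fun i _ => ((differentiable_D (hw i) (σ i)) x).hasFDerivAt)).differentiableAt
  have expand : ∀ σ : Equiv.Perm (Fin d),
      D (σ i₀) (fun x => p x * ∏ i ∈ univ.erase i₀, D (σ i) (w i) x) x
      = D (σ i₀) p x * ∏ i ∈ univ.erase i₀, D (σ i) (w i) x
        + p x * ∑ k ∈ univ.erase i₀, (∏ i ∈ (univ.erase i₀).erase k, D (σ i) (w i) x) *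
            D (σ i₀) (D (σ k) (w k)) x := by
    intro σ
    rw [D_mul (hp.differentiable (by simp)) (hP σ),
      D_prod _ _ (fun i _ => differentiable_D (hw i) (σ i))]
  have lhs_term : ∀ σ : Equiv.Perm (Fin d),
      (∏ i, (Matrix.of fun i j => if i = i₀ then D j p x else D j (w i) x) i (σ i))
      = D (σ i₀) p x * ∏ i ∈ univ.erase i₀, D (σ i) (w i) x := by
    intro σ
    rw [← Finset.mul_prod_erase univ _ (mem_univ i₀)]
    simp only [Matrix.of_apply, if_pos rfl]
    congr 1
    exact Finset.prod_congr rfl fun i hi => by simp [Finset.ne_of_mem_erase hi]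
  rw [det_expand]
  simp only [lhs_term, expand, mul_add]
  rw [Finset.sum_add_distrib, cancel_sum w hw p i₀ x, add_zero]

lemma integral_det_row_phi (w : Fin d → (Fin d → ℝ) → ℝ) (hw : ∀ i, ContDiff ℝ (⊤ : ℕ∞) (w i))
    (p : (Fin d → ℝ) → ℝ) (hp : ContDiff ℝ (⊤ : ℕ∞) p) (hps : HasCompactSupport p) (i₀ : Fin d) :
    ∫ x, (Matrix.of fun i j => if i = i₀ then D j p x else D j (w i) x).det = 0 := by
  have hh : ∀ σ : Equiv.Perm (Fin d),
      ContDiff ℝ (⊤ : ℕ∞) (fun x => p x * ∏ i ∈ univ.erase i₀, D (σ i) (w i) x) :=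
    fun σ => hp.mul (contDiff_prod (fun i _ => contDiff_D (hw i) (σ i)))
  have hhs : ∀ σ : Equiv.Perm (Fin d),
      HasCompactSupport (fun x => p x * ∏ i ∈ univ.erase i₀, D (σ i) (w i) x) :=
    fun σ => hps.mul_right
  simp only [det_row_phi_eq w hw p hp i₀]
  rw [integral_finset_sum]
  · refine Finset.sum_eq_zero fun σ _ => ?_
    rw [integral_const_mul, integral_D_eq_zero (hh σ) (hhs σ), mul_zero]
  · intro σ _
    exact (((contDiff_D (hh σ) (σ i₀)).continuous).integrable_of_hasCompactSupport
      (hasCompactSupport_D (hhs σ) (σ i₀))).const_mul _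

/-- The telescoping family of matrices. -/
noncomputable def Mtele (u v : Fin d → (Fin d → ℝ) → ℝ) (t : ℕ) (x : Fin d → ℝ) :
    Matrix (Fin d) (Fin d) ℝ :=
  Matrix.of fun i j => if (i : ℕ) < t then D j (u i) x else D j (v i) x

lemma det_diff_eq_sum (u v p : Fin d → (Fin d → ℝ) → ℝ)
    (hDu : ∀ i j x, D j (u i) x = D j (v i) x + D j (p i) x) (x : Fin d → ℝ) :
    (Matrix.of fun i j => D j (u i) x).det - (Matrix.of fun i j => D j (v i) x).det
      = ∑ t : Fin d, (Matrix.of fun i j => if i = t then D j (p i) x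
          else if (i : ℕ) < (t : ℕ) then D j (u i) x else D j (v i) x).det := by
  have step : ∀ t : Fin d,
      (Mtele u v ((t : ℕ) + 1) x).det - (Mtele u v (t : ℕ) x).det
      = (Matrix.of fun i j => if i = t then D j (p i) x
          else if (i : ℕ) < (t : ℕ) then D j (u i) x else D j (v i) x).det := by
    intro t
    have h1 : Mtele u v ((t : ℕ) + 1) x
        = (Mtele u v (t : ℕ) x).updateRow t (fun j => D j (v t) x + D j (p t) x) := by
      ext i j
      by_cases hi : i = t
      · subst hi
        rw [Matrix.updateRow_self]
        simp only [Mtele, Matrix.of_apply, if_pos (Nat.lt_succ_self _)]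
        exact hDu i j x
      · rw [Matrix.updateRow_ne hi]
        simp only [Mtele, Matrix.of_apply]
        have : ((i : ℕ) < (t : ℕ) + 1) ↔ ((i : ℕ) < (t : ℕ)) := by
          constructor
          · intro h
            rcases Nat.lt_succ_iff_lt_or_eq.mp h with h' | h'
            · exact h'
            · exact absurd (Fin.ext h') hi
          · exact fun h => Nat.lt_succ_of_lt h
        rw [if_congr this rfl rfl]
    have h2 : (Mtele u v (t : ℕ) x).updateRow t (fun j => D j (v t) x) = Mtele u v (t : ℕ) x := by
      ext i j
      by_cases hi : i = t
      · subst hi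
        rw [Matrix.updateRow_self]
        simp [Mtele]
      · rw [Matrix.updateRow_ne hi]
    have h3 : (Mtele u v (t : ℕ) x).updateRow t (fun j => D j (p t) x)
        = Matrix.of fun i j => if i = t then D j (p i) x
            else if (i : ℕ) < (t : ℕ) then D j (u i) x else D j (v i) x := by
      ext i j
      rw [Matrix.updateRow_apply]
      by_cases hi : i = t
      · subst hi; simp
      · simp [hi, Mtele]
    rw [h1, show (fun j => D j (v t) x + D j (p t) x)
        = ((fun j => D j (v t) x) + fun j => D j (p t) x) from rfl,
      Matrix.det_updateRow_add, h2, h3]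
    ring
  have h1 : (Matrix.of fun i j => D j (u i) x) = Mtele u v d x := by
    ext i j; simp [Mtele, i.isLt]
  have h0 : (Matrix.of fun i j => D j (v i) x) = Mtele u v 0 x := by
    ext i j; simp [Mtele]
  rw [h1, h0, ← Finset.sum_range_sub (fun t => (Mtele u v t x).det) d,
    ← Fin.sum_univ_eq_sum_range (fun t => (Mtele u v (t + 1) x).det - (Mtele u v t x).det) d]
  exact Finset.sum_congr rfl fun t _ => step t

end DetNullLag

open MeasureTheory Finset DetNullLag in
/-- The determinant of the gradient is a null-Lagrangean:
adding a compactly supported smooth perturbation does not change the integral of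
`det (∇y)`. -/
theorem det_gradient_null_lagrangean
    (d : ℕ) (Ω : Set (Fin d → ℝ)) (hΩ : IsOpen Ω) (hb : Bornology.IsBounded Ω)
    (y φ : (Fin d → ℝ) → (Fin d → ℝ))
    (hy : ContDiff ℝ (⊤ : ℕ∞) y) (hφ : ContDiff ℝ (⊤ : ℕ∞) φ)
    (hsupp : HasCompactSupport φ) (hsub : tsupport φ ⊆ Ω) :
    ∫ x in Ω, (Matrix.of fun i j =>
        fderiv ℝ y x (Pi.single j 1) i + fderiv ℝ φ x (Pi.single j 1) i).det
      = ∫ x in Ω, (Matrix.of fun i j => fderiv ℝ y x (Pi.single j 1) i).det := by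
  classical
  set v : Fin d → (Fin d → ℝ) → ℝ := fun i x => y x i with hvdef
  set p : Fin d → (Fin d → ℝ) → ℝ := fun i x => φ x i with hpdef
  set u : Fin d → (Fin d → ℝ) → ℝ := fun i x => y x i + φ x i with hudef
  have hvc : ∀ i, ContDiff ℝ (⊤ : ℕ∞) (v i) := fun i => contDiff_pi.mp hy i
  have hpc : ∀ i, ContDiff ℝ (⊤ : ℕ∞) (p i) := fun i => contDiff_pi.mp hφ i
  have huc : ∀ i, ContDiff ℝ (⊤ : ℕ∞) (u i) := fun i => (hvc i).add (hpc i)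
  have hpsupp : ∀ i, HasCompactSupport (p i) := by
    intro i
    refine HasCompactSupport.intro hsupp (fun x hx => ?_)
    have h0 : φ x = 0 := image_eq_zero_of_notMem_tsupport hx
    show φ x i = 0
    rw [h0]; rfl
  have hts : ∀ i, tsupport (p i) ⊆ tsupport φ := by
    intro i
    refine closure_mono fun z hz => ?_
    refine Function.mem_support.mpr fun h0 => hz ?_
    show φ z i = 0
    rw [h0]; rfl
  have entry : ∀ (f : (Fin d → ℝ) → (Fin d → ℝ)), ContDiff ℝ (⊤ : ℕ∞) f →
      ∀ (x : Fin d → ℝ) (j i : Fin d),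
      fderiv ℝ f x (Pi.single j 1) i = D j (fun x => f x i) x := by
    intro f hf x j i
    have h : fderiv ℝ f x = ContinuousLinearMap.pi fun i => fderiv ℝ (fun x => f x i) x :=
      fderiv_pi (fun i => ((contDiff_pi.mp hf i).differentiable (by simp)).differentiableAt)
    rw [h]
    simp [D]
  have hDu : ∀ (i j : Fin d) (x : Fin d → ℝ), D j (u i) x = D j (v i) x + D j (p i) x := by
    intro i j x
    have h := fderiv_fun_add (f := v i) (g := p i)
      (((hvc i).differentiable (by simp)) x) (((hpc i).differentiable (by simp)) x)
    simp only [D]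
    have hui : u i = fun z => v i z + p i z := rfl
    rw [hui, h]
    simp
  have hint1 : ∀ x : Fin d → ℝ, (Matrix.of fun i j =>
      fderiv ℝ y x (Pi.single j 1) i + fderiv ℝ φ x (Pi.single j 1) i).det
      = (Matrix.of fun i j => D j (u i) x).det := by
    intro x
    congr 1
    ext i j
    simp only [Matrix.of_apply]
    rw [entry y hy x j i, entry φ hφ x j i, hDu i j x]
  have hint2 : ∀ x : Fin d → ℝ, (Matrix.of fun i j => fderiv ℝ y x (Pi.single j 1) i).det
      = (Matrix.of fun i j => D j (v i) x).det := by
    intro x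
    congr 1
    ext i j
    simp only [Matrix.of_apply]
    exact entry y hy x j i
  simp only [hint1, hint2]
  set FU : (Fin d → ℝ) → ℝ := fun x => (Matrix.of fun i j => D j (u i) x).det with hFUdef
  set FV : (Fin d → ℝ) → ℝ := fun x => (Matrix.of fun i j => D j (v i) x).det with hFVdef
  have hFUc : Continuous FU :=
    Continuous.matrix_det (continuous_matrix fun i j => (contDiff_D (huc i) j).continuous)
  have hFVc : Continuous FV :=
    Continuous.matrix_det (continuous_matrix fun i j => (contDiff_D (hvc i) j).continuous)
  have hK : IsCompact (closure Ω) := hb.isCompact_closure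
  have hIU : IntegrableOn FU Ω volume :=
    (hFUc.continuousOn.integrableOn_compact hK).mono_set subset_closure
  have hIV : IntegrableOn FV Ω volume :=
    (hFVc.continuousOn.integrableOn_compact hK).mono_set subset_closure
  rw [← sub_eq_zero, ← integral_sub hIU hIV]
  have hout : ∀ x ∉ Ω, FU x - FV x = 0 := by
    intro x hx
    have hxt : x ∉ tsupport φ := fun h => hx (hsub h)
    have hp0 : ∀ i j, D j (p i) x = 0 :=
      fun i j => D_zero_of_nmem_tsupport (fun h => hxt (hts i h)) j
    have hmx : (Matrix.of fun i j => D j (u i) x) = (Matrix.of fun i j => D j (v i) x) := by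
      ext i j
      simp only [Matrix.of_apply]
      rw [hDu i j x, hp0 i j, add_zero]
    simp only [hFUdef, hFVdef, hmx, sub_self]
  rw [setIntegral_eq_integral_of_forall_compl_eq_zero hout]
  have tele : (fun x => FU x - FV x) = fun x => ∑ t : Fin d,
      (Matrix.of fun i j => if i = t then D j (p i) x
        else if (i : ℕ) < (t : ℕ) then D j (u i) x else D j (v i) x).det :=
    funext (det_diff_eq_sum u v p hDu)
  have hGcont : ∀ t : Fin d, Continuous (fun x => (Matrix.of fun i j =>
      if i = t then D j (p i) x
      else if (i : ℕ) < (t : ℕ) then D j (u i) x else D j (v i) x).det) := by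
    intro t
    refine Continuous.matrix_det (continuous_matrix fun i j => ?_)
    by_cases h1 : i = t
    · simpa only [Matrix.of_apply, if_pos h1] using (contDiff_D (hpc i) j).continuous
    · by_cases h2 : (i : ℕ) < (t : ℕ)
      · simpa only [Matrix.of_apply, if_neg h1, if_pos h2] using (contDiff_D (huc i) j).continuous
      · simpa only [Matrix.of_apply, if_neg h1, if_neg h2] using (contDiff_D (hvc i) j).continuous
  have hGint : ∀ t : Fin d, Integrable (fun x => (Matrix.of fun i j =>
      if i = t then D j (p i) x
      else if (i : ℕ) < (t : ℕ) then D j (u i) x else D j (v i) x).det) volume := by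
    intro t
    refine (hGcont t).integrable_of_hasCompactSupport
      (HasCompactSupport.intro hsupp fun x hx => ?_)
    refine Matrix.det_eq_zero_of_row_eq_zero t fun j => ?_
    simp only [Matrix.of_apply, if_pos rfl]
    exact D_zero_of_nmem_tsupport (fun h => hx (hts t h)) j
  rw [tele, integral_finset_sum _ (fun t _ => hGint t)]
  refine Finset.sum_eq_zero fun t _ => ?_
  have hwc : ∀ i : Fin d, ContDiff ℝ (⊤ : ℕ∞)
      ((fun i : Fin d => if (i : ℕ) < (t : ℕ) then u i else v i) i) := by
    intro i
    by_cases h : (i : ℕ) < (t : ℕ)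
    · simpa only [if_pos h] using huc i
    · simpa only [if_neg h] using hvc i
  have key := integral_det_row_phi (fun i : Fin d => if (i : ℕ) < (t : ℕ) then u i else v i) hwc
    (p t) (hpc t) (hpsupp t) t
  have hmx : (fun x => (Matrix.of fun i j => if i = t then D j (p i) x
      else if (i : ℕ) < (t : ℕ) then D j (u i) x else D j (v i) x).det)
      = fun x => (Matrix.of fun i j => if i = t then D j (p t) x
        else D j ((fun i : Fin d => if (i : ℕ) < (t : ℕ) then u i else v i) i) x).det := by
    funext x
    congr 1
    ext i j
    simp only [Matrix.of_apply]
    by_cases h1 : i = t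
    · subst h1; simp
    · simp only [if_neg h1]
      by_cases h2 : (i : ℕ) < (t : ℕ)
      · simp [h2]
      · simp [h2]
  rw [hmx]
  exact key
end

section
/- Let W: (0,∞) → ℝ with W' = τ, τ' > 0, τ'' < 0, and let α < λ with σ = √((τ(λ)−τ(α))/(λ−α)), Y(0) = σ(λ−α), and suppose τ_∞ := lim_{u→∞} τ(u) exists and is finite. Then the total energy production rate T = σY(0)² + 2Y(0)(τ_∞ − (W(λ)−W(α))/(λ−α)) is strictly positive and finite. -/
/-- Positivity of the total energy production rate
`T = σY(0)² + 2Y(0)(τ∞ − (W(λ)−W(α))/(λ−α))` of the slic-solution for 1-d fracture,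
where `W' = τ`, `τ' > 0`, `τ'' < 0`, `σ = √((τ(λ)−τ(α))/(λ−α))`, `Y(0) = σ(λ−α)`,
and `τ∞ = lim_{u→∞} τ(u)` is finite. -/
theorem fracture_energy_production_positive
    (W τ : ℝ → ℝ) (τinf : ℝ)
    (hW : ∀ x > 0, HasDerivAt W (τ x) x)
    (hτ : ContDiffOn ℝ 2 τ (Set.Ioi 0))
    (hτ' : ∀ u > 0, 0 < deriv τ u) (hτ'' : ∀ u > 0, deriv (deriv τ) u < 0)
    (hlim : Filter.Tendsto τ Filter.atTop (nhds τinf))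
    (α lam : ℝ) (hα : 0 < α) (hl : α < lam) :
    0 < Real.sqrt ((τ lam - τ α) / (lam - α))
          * (Real.sqrt ((τ lam - τ α) / (lam - α)) * (lam - α))^2
        + 2 * (Real.sqrt ((τ lam - τ α) / (lam - α)) * (lam - α))
          * (τinf - (W lam - W α) / (lam - α)) := by
  have hlamα : (0:ℝ) < lam - α := by linarith
  have hlam : 0 < lam := lt_trans hα hl
  -- τ strictly monotone on Ioi 0
  have hcont : ContinuousOn τ (Set.Ioi 0) := hτ.continuousOn
  have hmono : StrictMonoOn τ (Set.Ioi 0) := by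
    apply strictMonoOn_of_deriv_pos (convex_Ioi 0) hcont
    intro x hx
    rw [interior_Ioi] at hx
    exact hτ' x hx
  have hτlt : τ α < τ lam := hmono (Set.mem_Ioi.mpr hα) (Set.mem_Ioi.mpr hlam) hl
  have hσpos : 0 < Real.sqrt ((τ lam - τ α) / (lam - α)) :=
    Real.sqrt_pos.mpr (div_pos (by linarith) hlamα)
  set σ := Real.sqrt ((τ lam - τ α) / (lam - α)) with hσ
  -- τ s ≤ τinf for s > 0
  have hle : ∀ s > 0, τ s ≤ τinf := by
    intro s hs
    refine ge_of_tendsto hlim ?_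
    filter_upwards [Filter.eventually_ge_atTop s] with t ht
    rcases eq_or_lt_of_le ht with h | h
    · exact le_of_eq (congrArg τ h)
    · exact le_of_lt (hmono (Set.mem_Ioi.mpr hs) (Set.mem_Ioi.mpr (lt_trans hs h)) h)
  have hτlam_lt : τ lam < τinf :=
    lt_of_lt_of_le
      (hmono (Set.mem_Ioi.mpr hlam) (Set.mem_Ioi.mpr (by linarith)) (by linarith : lam < lam + 1))
      (hle (lam + 1) (by linarith))
  -- W lam - W α = ∫_α^lam τ
  have hsub : Set.uIcc α lam ⊆ Set.Ioi 0 := by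
    rw [Set.uIcc_of_le hl.le]
    intro x hx
    exact lt_of_lt_of_le hα hx.1
  have hcont' : ContinuousOn τ (Set.uIcc α lam) := hcont.mono hsub
  have hint : IntervalIntegrable τ MeasureTheory.volume α lam :=
    hcont'.intervalIntegrable
  have hW' : W lam - W α = ∫ x in α..lam, τ x := by
    refine (intervalIntegral.integral_eq_sub_of_hasDerivAt ?_ hint).symm
    intro x hx
    exact hW x (hsub hx)
  -- ∫_α^lam τ ≤ τ lam * (lam - α)
  have hintle : (∫ x in α..lam, τ x) ≤ τ lam * (lam - α) := by
    have : (∫ x in α..lam, τ x) ≤ ∫ x in α..lam, τ lam := by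
      apply intervalIntegral.integral_mono_on hl.le hint intervalIntegrable_const
      intro x hx
      rcases eq_or_lt_of_le hx.2 with h | h
      · exact le_of_eq (congrArg τ h)
      · exact le_of_lt (hmono (Set.mem_Ioi.mpr (lt_of_lt_of_le hα hx.1))
          (Set.mem_Ioi.mpr hlam) h)
    simpa [mul_comm] using this
  have havg : (W lam - W α) / (lam - α) < τinf := by
    rw [hW', div_lt_iff₀ hlamα]
    calc (∫ x in α..lam, τ x) ≤ τ lam * (lam - α) := hintle
      _ < τinf * (lam - α) := by exact mul_lt_mul_of_pos_right hτlam_lt hlamα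
  have h1 : 0 < σ * (σ * (lam - α))^2 := by positivity
  have h2 : 0 < 2 * (σ * (lam - α)) * (τinf - (W lam - W α) / (lam - α)) := by
    apply mul_pos (by positivity)
    linarith
  linarith
end

section
/- Let φ ∈ C_c^∞(ℝ) be a nonnegative symmetric mollifier with ∫φ = 1, φ_n(x) = nφ(nx), and let τ: (0,∞) → ℝ be continuous, increasing, with sublinear growth: lim_{u→∞} τ(u)/u = 0. Then for any fixed α, c > 0 and T > 0, ∫_0^T ∫_{−1/n}^{1/n} |τ(α + 2φ_n(x) t c)| dx dt → 0 as n → ∞. -/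
/-- Sublinear growth of the stress makes the mollification-layer contribution vanish:
if `lim_{u→∞} τ(u)/u = 0` then
`∫_0^T ∫_{−1/n}^{1/n} |τ(α + 2 φₙ(x) t c)| dx dt → 0` as `n → ∞`,
where `φₙ(x) = n φ(n x)` for a nonnegative symmetric mollifier `φ`. -/
theorem sublinear_stress_layer_vanishes
    (φ : ℝ → ℝ) (hφs : ContDiff ℝ (⊤ : ℕ∞) φ) (hφc : HasCompactSupport φ)
    (hφ0 : ∀ x, 0 ≤ φ x) (hsym : ∀ x, φ (-x) = φ x) (hint : ∫ x, φ x = 1)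
    (τ : ℝ → ℝ) (hτc : ContinuousOn τ (Set.Ioi 0)) (hτm : MonotoneOn τ (Set.Ioi 0))
    (hsub : Filter.Tendsto (fun u => τ u / u) Filter.atTop (nhds 0))
    (α c T : ℝ) (hα : 0 < α) (hc : 0 < c) (hT : 0 < T) :
    Filter.Tendsto (fun n : ℕ =>
        ∫ t in (0:ℝ)..T, ∫ x in (-(1/(n:ℝ)))..(1/(n:ℝ)),
          |τ (α + 2 * ((n:ℝ) * φ ((n:ℝ) * x)) * t * c)|)
      Filter.atTop (nhds 0) := by
  -- bound on φ
  obtain ⟨M, hM⟩ := hφc.exists_bound_of_continuous hφs.continuous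
  have hM' : ∀ y, φ y ≤ M := fun y => (le_abs_self _).trans (by simpa [Real.norm_eq_abs] using hM y)
  have hM0 : 0 ≤ M := (norm_nonneg _).trans (hM 0)
  set D : ℝ := 2 * M * T * c with hDdef
  have hD : 0 ≤ D := by positivity
  set K : ℕ → ℝ := fun n => α + n * D with hKdef
  have hKpos : ∀ n, 0 < K n := by
    intro n
    have : (0:ℝ) ≤ n * D := by positivity
    simp only [hKdef]; linarith
  set C : ℕ → ℝ := fun n => |τ α| + |τ (K n)| with hCdef
  set B : ℕ → ℝ := fun n => (|τ α| / n + |τ (K n)| / n) * (2 * T) with hBdef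
  set a : ℕ → ℝ := fun n => ∫ t in (0:ℝ)..T, ∫ x in (-(1/(n:ℝ)))..(1/(n:ℝ)),
          |τ (α + 2 * ((n:ℝ) * φ ((n:ℝ) * x)) * t * c)| with hadef
  -- lower bound
  have hlow : ∀ n, 0 ≤ a n := by
    intro n
    apply intervalIntegral.integral_nonneg hT.le
    intro t ht
    apply intervalIntegral.integral_nonneg
    · have : (0:ℝ) ≤ 1 / n := by positivity
      linarith
    · intro x hx; exact abs_nonneg _
  -- upper bound
  have hup : ∀ n, a n ≤ B n := by
    intro n
    have hCn : 0 ≤ C n := by positivity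
    have hinner : ∀ t ∈ Set.uIoc (0:ℝ) T,
        ‖∫ x in (-(1/(n:ℝ)))..(1/(n:ℝ)),
          |τ (α + 2 * ((n:ℝ) * φ ((n:ℝ) * x)) * t * c)|‖ ≤ C n * (2 / n) := by
      intro t ht
      rw [Set.uIoc_of_le hT.le] at ht
      have h1 : ‖∫ x in (-(1/(n:ℝ)))..(1/(n:ℝ)),
          |τ (α + 2 * ((n:ℝ) * φ ((n:ℝ) * x)) * t * c)|‖ ≤
          C n * |(1/(n:ℝ)) - (-(1/(n:ℝ)))| := by
        apply intervalIntegral.norm_integral_le_of_norm_le_const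
        intro x hx
        set u : ℝ := α + 2 * ((n:ℝ) * φ ((n:ℝ) * x)) * t * c with hudef
        have hn0 : (0:ℝ) ≤ n := Nat.cast_nonneg n
        have hφx : 0 ≤ φ ((n:ℝ) * x) := hφ0 _
        have hu1 : α ≤ u := by
          have : (0:ℝ) ≤ 2 * ((n:ℝ) * φ ((n:ℝ) * x)) * t * c := by
            have := ht.1.le; positivity
          simp only [hudef]; linarith
        have hu2 : u ≤ K n := by
          have hφt : φ ((n:ℝ) * x) * t ≤ M * T :=
            mul_le_mul (hM' _) ht.2 ht.1.le hM0
          have h2 : 2 * c * (n:ℝ) * (φ ((n:ℝ) * x) * t) ≤ 2 * c * (n:ℝ) * (M * T) :=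
            mul_le_mul_of_nonneg_left hφt (by positivity)
          simp only [hudef, hKdef, hDdef]; nlinarith
        have hupos : (0:ℝ) < u := lt_of_lt_of_le hα hu1
        have hτ1 : τ α ≤ τ u := hτm hα hupos hu1
        have hτ2 : τ u ≤ τ (K n) := hτm hupos (hKpos n) hu2
        have : |τ u| ≤ C n := by
          rw [abs_le]
          constructor
          · have := neg_abs_le (τ α); have := abs_nonneg (τ (K n))
            simp only [hCdef]; linarith
          · have := le_abs_self (τ (K n)); have := abs_nonneg (τ α)
            simp only [hCdef]; linarith
        simpa using this
      have habs : |(1/(n:ℝ)) - (-(1/(n:ℝ)))| = 2 / n := by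
        have : (0:ℝ) ≤ 1 / n := by positivity
        rw [abs_of_nonneg (by linarith)]; ring
      rw [habs] at h1; exact h1
    have h2 : ‖a n‖ ≤ C n * (2 / n) * |T - 0| :=
      intervalIntegral.norm_integral_le_of_norm_le_const hinner
    have h3 : a n ≤ C n * (2 / n) * T := by
      rw [sub_zero, abs_of_pos hT] at h2
      calc a n ≤ ‖a n‖ := le_abs_self _
        _ ≤ _ := h2
    calc a n ≤ C n * (2 / n) * T := h3
      _ = B n := by simp only [hCdef, hBdef]; ring
  -- B tends to 0
  have h1 : Filter.Tendsto (fun n : ℕ => |τ α| / n) Filter.atTop (nhds 0) :=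
    tendsto_const_div_atTop_nhds_zero_nat _
  have h2 : Filter.Tendsto (fun n : ℕ => |τ (K n)| / n) Filter.atTop (nhds 0) := by
    rcases eq_or_lt_of_le hD with hD0 | hDpos
    · have : ∀ n : ℕ, |τ (K n)| / n = |τ α| / n := by
        intro n; simp [hKdef, ← hD0]
      simpa [this] using h1
    · have hK : Filter.Tendsto K Filter.atTop Filter.atTop := by
        simp only [hKdef]
        apply Filter.tendsto_atTop_add_const_left
        exact (tendsto_natCast_atTop_atTop).atTop_mul_const hDpos
      have hA : Filter.Tendsto (fun n : ℕ => τ (K n) / K n) Filter.atTop (nhds 0) :=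
        hsub.comp hK
      have hB2 : Filter.Tendsto (fun n : ℕ => K n / n) Filter.atTop (nhds D) := by
        have heq : ∀ᶠ n : ℕ in Filter.atTop, α / n + D = K n / n := by
          filter_upwards [Filter.eventually_gt_atTop 0] with n hn
          have hn' : (n:ℝ) ≠ 0 := Nat.cast_ne_zero.mpr hn.ne'
          field_simp [hKdef]; ring
        have : Filter.Tendsto (fun n : ℕ => α / n + D) Filter.atTop (nhds (0 + D)) :=
          (tendsto_const_div_atTop_nhds_zero_nat α).add tendsto_const_nhds
        rw [zero_add] at this
        exact Filter.Tendsto.congr' heq this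
      have hmul : Filter.Tendsto (fun n : ℕ => τ (K n) / K n * (K n / n))
          Filter.atTop (nhds (0 * D)) := hA.mul hB2
      rw [zero_mul] at hmul
      have heq : ∀ᶠ n : ℕ in Filter.atTop, τ (K n) / K n * (K n / n) = τ (K n) / n := by
        filter_upwards with n
        have hk : K n ≠ 0 := (hKpos n).ne'
        field_simp
      have h4 : Filter.Tendsto (fun n : ℕ => τ (K n) / n) Filter.atTop (nhds 0) :=
        Filter.Tendsto.congr' heq hmul
      have h5 := h4.abs
      rw [abs_zero] at h5
      refine h5.congr fun n => ?_
      rw [abs_div, Nat.abs_cast]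
  have hBlim : Filter.Tendsto B Filter.atTop (nhds 0) := by
    have := (h1.add h2).mul_const (2 * T)
    simpa [hBdef] using this
  exact tendsto_of_tendsto_of_tendsto_of_le_of_le tendsto_const_nhds hBlim hlow hup
end

section
/- Let φ ∈ C_c^∞(ℝ) be a symmetric mollifier with φ(0) > 0 and φ_n(x) = nφ(nx), and let τ be continuous increasing with L := lim_{u→∞} τ(u)/u > 0. Then for fixed t, c > 0, liminf_{n→∞} ∫_{−1/n}^{1/n} τ(α + 2φ_n(x) t c) dx ≥ 2tcL' for some L' > 0; in particular the integral does not tend to 0. -/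
set_option maxHeartbeats 1000000

/-- If the stress has (super)linear growth `L = lim_{u→∞} τ(u)/u > 0`, then the
mollification-layer contribution does not vanish: for fixed `t, c > 0`,
`liminf_{n→∞} ∫_{−1/n}^{1/n} τ(α + 2 φₙ(x) t c) dx ≥ 2 t c L'` for some `L' > 0`;
in particular the integral does not tend to `0`. -/
theorem superlinear_stress_layer_does_not_vanish
    (φ : ℝ → ℝ) (hφs : ContDiff ℝ (⊤ : ℕ∞) φ) (hφc : HasCompactSupport φ)
    (hφ0 : ∀ x, 0 ≤ φ x) (hsym : ∀ x, φ (-x) = φ x) (hint : ∫ x, φ x = 1)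
    (hφpos : 0 < φ 0)
    (τ : ℝ → ℝ) (hτc : ContinuousOn τ (Set.Ioi 0)) (hτm : MonotoneOn τ (Set.Ioi 0))
    (L : ℝ) (hL : 0 < L)
    (hlim : Filter.Tendsto (fun u => τ u / u) Filter.atTop (nhds L))
    (α t c : ℝ) (hα : 0 < α) (ht : 0 < t) (hc : 0 < c) :
    (∃ L' > 0, 2 * t * c * L' ≤ Filter.liminf (fun n : ℕ =>
        ∫ x in (-(1/(n:ℝ)))..(1/(n:ℝ)),
          τ (α + 2 * ((n:ℝ) * φ ((n:ℝ) * x)) * t * c)) Filter.atTop)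
    ∧ ¬ Filter.Tendsto (fun n : ℕ =>
        ∫ x in (-(1/(n:ℝ)))..(1/(n:ℝ)),
          τ (α + 2 * ((n:ℝ) * φ ((n:ℝ) * x)) * t * c)) Filter.atTop (nhds 0) := by
  set I : ℕ → ℝ := fun n : ℕ =>
      ∫ x in (-(1/(n:ℝ)))..(1/(n:ℝ)), τ (α + 2 * ((n:ℝ) * φ ((n:ℝ) * x)) * t * c) with hI
  have hφcont : Continuous φ := hφs.continuous
  obtain ⟨δ₀, hδ₀, hδ₀'⟩ := Metric.continuousAt_iff.mp hφcont.continuousAt (φ 0 / 2)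
    (by positivity)
  set δ : ℝ := min (δ₀ / 2) 1 with hδdef
  have hδpos : 0 < δ := lt_min (by linarith) one_pos
  have hδ1 : δ ≤ 1 := min_le_right _ _
  have hδ : ∀ y : ℝ, |y| ≤ δ → φ 0 / 2 ≤ φ y := by
    intro y hy
    have hdy : dist y 0 < δ₀ := by
      rw [Real.dist_eq, sub_zero]
      exact lt_of_le_of_lt hy (lt_of_le_of_lt (min_le_left _ _) (by linarith))
    have h2 := hδ₀' hdy
    rw [Real.dist_eq] at h2
    have := (abs_lt.mp h2).1
    linarith
  -- global upper bound for φ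
  obtain ⟨B, hB⟩ := hφcont.bddAbove_range_of_hasCompactSupport hφc
  have hBb : ∀ x : ℝ, φ x ≤ B := fun x => hB (Set.mem_range_self x)
  have hBpos : 0 < B := lt_of_lt_of_le hφpos (hBb 0)
  set K : ℝ := φ 0 * t * c with hKdef
  have hK : 0 < K := by positivity
  set L' : ℝ := δ * L * φ 0 / 4 with hL'def
  have hL' : 0 < L' := by positivity
  obtain ⟨M, hM⟩ := Filter.eventually_atTop.mp
    (hlim.eventually (eventually_gt_nhds (half_lt_self hL)))
  have hτlin : ∀ u : ℝ, max M 1 ≤ u → L / 2 * u ≤ τ u := by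
    intro u hu
    have hu1 : (1:ℝ) ≤ u := le_trans (le_max_right _ _) hu
    have hupos : 0 < u := by linarith
    have := hM u (le_trans (le_max_left _ _) hu)
    rw [lt_div_iff₀ hupos] at this
    linarith
  obtain ⟨M₂, hM₂⟩ := Filter.eventually_atTop.mp
    (hlim.eventually (eventually_lt_nhds (by linarith : L < 2 * L)))
  have hτub : ∀ u : ℝ, max M₂ 1 ≤ u → τ u ≤ 2 * L * u := by
    intro u hu
    have hu1 : (1:ℝ) ≤ u := le_trans (le_max_right _ _) hu
    have hupos : 0 < u := by linarith
    have := hM₂ u (le_trans (le_max_left _ _) hu)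
    rw [div_lt_iff₀ hupos] at this
    linarith
  -- continuity and integrability of the integrand
  have hgcont : ∀ n : ℕ, Continuous (fun x : ℝ => τ (α + 2 * ((n:ℝ) * φ ((n:ℝ) * x)) * t * c)) := by
    intro n
    apply hτc.comp_continuous (by continuity)
    intro x
    have h1 : 0 ≤ 2 * ((n:ℝ) * φ ((n:ℝ) * x)) * t * c := by
      have := hφ0 ((n:ℝ) * x)
      positivity
    exact Set.mem_Ioi.mpr (by linarith)
  have hgint : ∀ n : ℕ, ∀ p q : ℝ,
      IntervalIntegrable (fun x : ℝ => τ (α + 2 * ((n:ℝ) * φ ((n:ℝ) * x)) * t * c))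
        MeasureTheory.volume p q := fun n p q => (hgcont n).intervalIntegrable p q
  have hglb : ∀ n : ℕ, ∀ x : ℝ, τ α ≤ τ (α + 2 * ((n:ℝ) * φ ((n:ℝ) * x)) * t * c) := by
    intro n x
    have h1 : 0 ≤ 2 * ((n:ℝ) * φ ((n:ℝ) * x)) * t * c := by
      have := hφ0 ((n:ℝ) * x); positivity
    exact hτm (Set.mem_Ioi.mpr hα) (Set.mem_Ioi.mpr (by linarith)) (by linarith)
  -- eventual lower bound
  have hev : ∀ᶠ n : ℕ in Filter.atTop, 2 * t * c * L' ≤ I n := by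
    have h1 : Filter.Tendsto (fun n : ℕ => α + (n:ℝ) * K) Filter.atTop Filter.atTop :=
      Filter.tendsto_atTop_add_const_left _ α
        (Filter.Tendsto.atTop_mul_const hK tendsto_natCast_atTop_atTop)
    have h2 : Filter.Tendsto (fun n : ℕ => 2 * |τ α| / (n:ℝ)) Filter.atTop (nhds 0) :=
      Filter.Tendsto.div_atTop tendsto_const_nhds tendsto_natCast_atTop_atTop
    filter_upwards [h1.eventually_ge_atTop (max M 1),
      h2.eventually (eventually_le_nhds (by positivity : (0:ℝ) < δ * L * K / 2)),
      Filter.eventually_ge_atTop 1] with n hn1 hn2 hn3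
    have hnR : (1:ℝ) ≤ (n:ℝ) := by exact_mod_cast hn3
    have hnpos : (0:ℝ) < (n:ℝ) := by linarith
    set g : ℝ → ℝ := fun x => τ (α + 2 * ((n:ℝ) * φ ((n:ℝ) * x)) * t * c) with hg
    set a : ℝ := 1 / (n:ℝ) with ha
    set d : ℝ := δ / (n:ℝ) with hd
    have hapos : 0 < a := by positivity
    have hdpos : 0 < d := by positivity
    have hda : d ≤ a := by rw [hd, ha]; gcongr
    have hsplit : I n = (∫ x in (-a)..(-d), g x) + (∫ x in (-d)..d, g x)
        + (∫ x in d..a, g x) := by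
      rw [hI]
      simp only [← ha]
      rw [add_assoc,
        intervalIntegral.integral_add_adjacent_intervals (hgint n (-d) d) (hgint n d a),
        intervalIntegral.integral_add_adjacent_intervals (hgint n (-a) (-d)) (hgint n (-d) a)]
    have hmid : 2 * d * τ (α + (n:ℝ) * K) ≤ ∫ x in (-d)..d, g x := by
      have hmono : ∀ x ∈ Set.Icc (-d) d, τ (α + (n:ℝ) * K) ≤ g x := by
        intro x hx
        have hxabs : |x| ≤ d := abs_le.mpr ⟨hx.1, hx.2⟩
        have hnx : |(n:ℝ) * x| ≤ δ := by
          rw [abs_mul, abs_of_pos hnpos]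
          calc (n:ℝ) * |x| ≤ (n:ℝ) * d := by nlinarith
            _ = δ := by rw [hd]; field_simp
        have hφx := hδ _ hnx
        have harg : α + (n:ℝ) * K ≤ α + 2 * ((n:ℝ) * φ ((n:ℝ) * x)) * t * c := by
          have h0 : (0:ℝ) ≤ (n:ℝ) * t * c := by positivity
          have h3 := mul_le_mul_of_nonneg_left
            (by linarith : φ 0 ≤ 2 * φ ((n:ℝ) * x)) h0
          rw [hKdef]; nlinarith [h3]
        have h1 : 0 < α + (n:ℝ) * K := by nlinarith
        have h2 : 0 ≤ 2 * ((n:ℝ) * φ ((n:ℝ) * x)) * t * c := by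
          have := hφ0 ((n:ℝ) * x); positivity
        exact hτm (Set.mem_Ioi.mpr h1) (Set.mem_Ioi.mpr (by linarith)) harg
      calc 2 * d * τ (α + (n:ℝ) * K)
          = ∫ _ in (-d)..d, τ (α + (n:ℝ) * K) := by
            rw [intervalIntegral.integral_const, smul_eq_mul]; try ring
        _ ≤ ∫ x in (-d)..d, g x :=
            intervalIntegral.integral_mono_on (by linarith)
              intervalIntegrable_const (hgint n _ _) hmono
    have hleft : (a - d) * τ α ≤ ∫ x in (-a)..(-d), g x := by
      calc (a - d) * τ α = ∫ _ in (-a)..(-d), τ α := by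
            rw [intervalIntegral.integral_const, smul_eq_mul]; try ring
        _ ≤ ∫ x in (-a)..(-d), g x :=
            intervalIntegral.integral_mono_on (by linarith)
              intervalIntegrable_const (hgint n _ _) (fun x _ => hglb n x)
    have hright : (a - d) * τ α ≤ ∫ x in d..a, g x := by
      calc (a - d) * τ α = ∫ _ in d..a, τ α := by
            rw [intervalIntegral.integral_const, smul_eq_mul]; try ring
        _ ≤ ∫ x in d..a, g x :=
            intervalIntegral.integral_mono_on hda
              intervalIntegrable_const (hgint n _ _) (fun x _ => hglb n x)
    have hτn : L / 2 * (α + (n:ℝ) * K) ≤ τ (α + (n:ℝ) * K) := hτlin _ hn1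
    have hmid2 : δ * L * K ≤ 2 * d * τ (α + (n:ℝ) * K) := by
      have h1 : L / 2 * ((n:ℝ) * K) ≤ τ (α + (n:ℝ) * K) := by nlinarith
      have h2 : 2 * d * (L / 2 * ((n:ℝ) * K)) ≤ 2 * d * τ (α + (n:ℝ) * K) := by nlinarith
      calc δ * L * K = 2 * d * (L / 2 * ((n:ℝ) * K)) := by
            rw [hd]; field_simp
        _ ≤ _ := h2
    have hside : -(δ * L * K / 2) ≤ 2 * ((a - d) * τ α) := by
      have h1 : -((a - d) * |τ α|) ≤ (a - d) * τ α := by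
        nlinarith [neg_abs_le (τ α), abs_nonneg (τ α)]
      have h2 : (a - d) * |τ α| ≤ a * |τ α| := by nlinarith [abs_nonneg (τ α)]
      have h3 : 2 * (a * |τ α|) = 2 * |τ α| / (n:ℝ) := by rw [ha]; field_simp
      nlinarith
    have hfin : 2 * t * c * L' = δ * L * K / 2 := by rw [hL'def, hKdef]; ring
    rw [hsplit, hfin]
    linarith
  -- eventual upper bound (needed for coboundedness of the liminf)
  have hevU : ∀ᶠ n : ℕ in Filter.atTop, I n ≤ 4 * L * α + 8 * L * B * t * c := by
    have h1 : Filter.Tendsto (fun n : ℕ => α + 2 * (n:ℝ) * B * t * c)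
        Filter.atTop Filter.atTop := by
      apply Filter.tendsto_atTop_add_const_left
      have : Filter.Tendsto (fun n : ℕ => (n:ℝ) * (2 * B * t * c)) Filter.atTop Filter.atTop :=
        Filter.Tendsto.atTop_mul_const (by positivity) tendsto_natCast_atTop_atTop
      refine this.congr (fun n => by ring)
    filter_upwards [h1.eventually_ge_atTop (max M₂ 1),
      Filter.eventually_ge_atTop 1] with n hn1 hn3
    have hnR : (1:ℝ) ≤ (n:ℝ) := by exact_mod_cast hn3
    have hnpos : (0:ℝ) < (n:ℝ) := by linarith
    set C : ℝ := α + 2 * (n:ℝ) * B * t * c with hC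
    have hCpos : 0 < C := by positivity
    have hub : ∀ x ∈ Set.Icc (-(1/(n:ℝ))) (1/(n:ℝ)),
        τ (α + 2 * ((n:ℝ) * φ ((n:ℝ) * x)) * t * c) ≤ τ C := by
      intro x _
      have h2 : 0 ≤ 2 * ((n:ℝ) * φ ((n:ℝ) * x)) * t * c := by
        have := hφ0 ((n:ℝ) * x); positivity
      have harg : α + 2 * ((n:ℝ) * φ ((n:ℝ) * x)) * t * c ≤ C := by
        rw [hC]
        have h0 : (0:ℝ) ≤ 2 * (n:ℝ) * t * c := by positivity
        nlinarith [mul_le_mul_of_nonneg_left (hBb ((n:ℝ) * x)) h0]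
      exact hτm (Set.mem_Ioi.mpr (by linarith)) (Set.mem_Ioi.mpr hCpos) harg
    have hstep : I n ≤ (2 / (n:ℝ)) * τ C := by
      have hhalf : -(1/(n:ℝ)) ≤ 1/(n:ℝ) := by
        have h : (0:ℝ) < 1/(n:ℝ) := by positivity
        linarith
      have := intervalIntegral.integral_mono_on hhalf (hgint n _ _)
        (intervalIntegrable_const (c := τ C)) hub
      rw [intervalIntegral.integral_const, smul_eq_mul] at this
      calc I n ≤ (1/(n:ℝ) - -(1/(n:ℝ))) * τ C := this
        _ = (2 / (n:ℝ)) * τ C := by ring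
    have hτC : τ C ≤ 2 * L * C := hτub C hn1
    have h2n : (0:ℝ) < 2 / (n:ℝ) := by positivity
    calc I n ≤ (2 / (n:ℝ)) * τ C := hstep
      _ ≤ (2 / (n:ℝ)) * (2 * L * C) := mul_le_mul_of_nonneg_left hτC h2n.le
      _ = 4 * L * α / (n:ℝ) + 8 * L * B * t * c * ((n:ℝ) / (n:ℝ)) := by
          rw [hC]; field_simp; ring
      _ ≤ 4 * L * α + 8 * L * B * t * c := by
          rw [div_self (ne_of_gt hnpos)]
          have : 4 * L * α / (n:ℝ) ≤ 4 * L * α := by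
            rw [div_le_iff₀ hnpos]
            nlinarith [mul_le_mul_of_nonneg_left hnR (by positivity : (0:ℝ) ≤ 4*L*α)]
          linarith
    -- done
  have hcob : Filter.IsCoboundedUnder (· ≥ ·) Filter.atTop I :=
    Filter.isCoboundedUnder_ge_of_eventually_le _ hevU
  have hlb : 2 * t * c * L' ≤ Filter.liminf I Filter.atTop :=
    Filter.le_liminf_of_le hcob hev
  refine ⟨⟨L', hL', hlb⟩, ?_⟩
  intro hT
  have h0 : Filter.liminf I Filter.atTop = 0 := hT.liminf_eq
  rw [h0] at hlb
  nlinarith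
end
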